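/- arXiv:1404.2730 — 2 statements merged into one kernel-verified Lean document; each statement's English description precedes it below -/
import Mathlib

section
/- Let F and G be cyclically symmetric homogeneous polynomials on ℝ^N × ℝ^N of degrees r' and r'' respectively, with seeds f of class D(C_f, σ') and g of class D(C_g, σ''), and assume σ' ≠ σ''. Then the Poisson bracket H = {F, G} admits a seed h of class D(C_h, σ) with σ = min(σ', σ'') and C_h = r' r'' C_f C_g / ((1 − e^{−max(σ',σ'')}) (1 − e^{−|σ'−σ''|})). -/
open MvPolynomial Finset Real

/-- index set for the `2N` variables: `inl j` ↦ `x_j`, `inr j` ↦ `y_j` (indices mod `N`). -/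
abbrev Idx (N : ℕ) := Fin N ⊕ Fin N

open Fin.CommRing in
/-- the cyclic shift `τ^s` (`s ∈ ℤ`) acting on polynomials: `τ^s X_j = X_{j+s}`
(indices mod `N`), separately on the `x` and `y` variables, so that
`(τ^s f)(x,y) = f(τ^s x, τ^s y)`. -/
noncomputable def tauPow (N : ℕ) [NeZero N] (s : ℤ) (f : MvPolynomial (Idx N) ℝ) :
    MvPolynomial (Idx N) ℝ :=
  rename (Sum.map (· + (s : Fin N)) (· + (s : Fin N))) f

/-- `f ↦ f^⊕ := ∑_{l=1}^N τ^l f`. -/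
noncomputable def oplus (N : ℕ) [NeZero N] (f : MvPolynomial (Idx N) ℝ) :
    MvPolynomial (Idx N) ℝ :=
  ∑ l ∈ Finset.range N, tauPow N ((l : ℤ) + 1) f

/-- the polynomial norm `‖f‖_R`; for a homogeneous polynomial of degree `s` it equals
`R^s ∑_{|j|+|k|=s} |f_{j,k}|`. -/
noncomputable def pnorm {N : ℕ} (R : ℝ) (f : MvPolynomial (Idx N) ℝ) : ℝ :=
  ∑ d ∈ f.support, |f.coeff d| * R ^ (d.sum fun _ e => e)

/-- the Poisson bracket `{f,g} = ∑_j (∂f/∂x_j ∂g/∂y_j − ∂f/∂y_j ∂g/∂x_j)`. -/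
noncomputable def poisson (N : ℕ) (f g : MvPolynomial (Idx N) ℝ) : MvPolynomial (Idx N) ℝ :=
  ∑ j : Fin N,
    (pderiv (Sum.inl j) f * pderiv (Sum.inr j) g - pderiv (Sum.inr j) f * pderiv (Sum.inl j) g)

/-- `p` involves only the sites `0,…,m` (it is left aligned with interaction distance `≤ m`). -/
def SuppIn (N : ℕ) (m : ℕ) (p : MvPolynomial (Idx N) ℝ) : Prop :=
  ∀ d ∈ p.support, ∀ j : Fin N, (d (Sum.inl j) ≠ 0 ∨ d (Sum.inr j) ≠ 0) → (j : ℕ) ≤ m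

/-- the seed `f` is of class `D(C,σ)`: it decomposes as `f = ∑_{m≥0} f^(m)` with each `f^(m)`
left aligned, containing only monomials of interaction distance `≤ m`, and
`‖f^(m)‖₁ ≤ C e^{−σ m}`. -/
def ClassD (N : ℕ) (Cf σ : ℝ) (f : MvPolynomial (Idx N) ℝ) : Prop :=
  ∃ (M : ℕ) (comp : ℕ → MvPolynomial (Idx N) ℝ),
    f = ∑ m ∈ Finset.range M, comp m ∧
    (∀ m, M ≤ m → comp m = 0) ∧
    (∀ m, SuppIn N m (comp m)) ∧
    (∀ m, pnorm 1 (comp m) ≤ Cf * Real.exp (-σ * m))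

/-!
Decompose the seeds as `f = ∑ₘ f⁽ᵐ⁾`, `g = ∑ₙ g⁽ⁿ⁾` (projecting each piece to the degree of
`f`, resp. `g`). Since the bracket commutes with the cyclic shift,
`{f^⊕, g^⊕} = (∑_{m,n,v} {f⁽ᵐ⁾, τ^v g⁽ⁿ⁾})^⊕`. The term `{f⁽ᵐ⁾, τ^v g⁽ⁿ⁾}` only involves sites in
the union of two cyclic arcs of lengths `m` and `n` and vanishes unless they meet, so after a
shift (invisible to `^⊕`) it is left aligned with interaction distance `≤ m + n`; grouping by
`k = m + n` gives the seed. For the norms, summing over the relative shift `v` gives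
`∑_v ‖{p, τ^v q}‖₁ ≤ r' r'' ‖p‖₁ ‖q‖₁` because `∑_i ‖∂_i p‖₁ ≤ r' ‖p‖₁` for homogeneous `p`, and
`∑_{m+n=k} e^{-σ'm-σ''n} ≤ e^{-min(σ',σ'')k} / (1 - e^{-|σ'-σ''|})` is a geometric series.
-/

open Fin.CommRing

variable {N : ℕ}

namespace Idx

def site : Idx N → Fin N := Sum.elim id id

def shift (v : Fin N) : Idx N → Idx N := Sum.map (· + v) (· + v)

lemma shift_injective (v : Fin N) : Function.Injective (shift v) :=
  (add_left_injective v).sumMap (add_left_injective v)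

lemma shift_comp_shift (a b : Fin N) : shift a ∘ shift b = shift (b + a) := by
  funext i; cases i <;> simp [shift, add_assoc]

lemma site_shift (v : Fin N) (i : Idx N) : site (shift v i) = site i + v := by
  cases i <;> rfl

end Idx

open Idx

lemma poisson_sum_left {ι : Type*} (s : Finset ι) (F : ι → MvPolynomial (Idx N) ℝ)
    (q : MvPolynomial (Idx N) ℝ) :
    poisson N (∑ i ∈ s, F i) q = ∑ i ∈ s, poisson N (F i) q := by
  simp only [poisson, map_sum, Finset.sum_mul, ← Finset.sum_sub_distrib]
  exact Finset.sum_comm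

lemma poisson_sum_right {ι : Type*} (s : Finset ι) (p : MvPolynomial (Idx N) ℝ)
    (G : ι → MvPolynomial (Idx N) ℝ) :
    poisson N p (∑ i ∈ s, G i) = ∑ i ∈ s, poisson N p (G i) := by
  simp only [poisson, map_sum, Finset.mul_sum, ← Finset.sum_sub_distrib]
  exact Finset.sum_comm

namespace MvPolynomial

variable {σ R : Type*} [CommSemiring R] {s : Set σ} {p : MvPolynomial σ R}

theorem pderiv_mem_supported (i : σ) (hp : p ∈ supported R s) :
    pderiv i p ∈ supported R s := by
  classical
  rw [supported_eq_adjoin_X] at hp ⊢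
  induction hp using Algebra.adjoin_induction with
  | mem x hx =>
    obtain ⟨j, -, rfl⟩ := hx
    rw [pderiv_X, Pi.single_apply]
    split_ifs <;> simp
  | algebraMap r => simp
  | add x y _ _ hx hy => simpa using Subalgebra.add_mem _ hx hy
  | mul x y hx' hy' hx hy =>
    rw [Derivation.leibniz, smul_eq_mul, smul_eq_mul]
    exact Subalgebra.add_mem _ (Subalgebra.mul_mem _ hx' hy) (Subalgebra.mul_mem _ hy' hx)

theorem pderiv_eq_zero_of_mem_supported {i : σ} (hp : p ∈ supported R s) (hi : i ∉ s) :
    pderiv i p = 0 :=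
  pderiv_eq_zero_of_notMem_vars fun h => hi (mem_supported.1 hp h)

end MvPolynomial

noncomputable def onSites (S : Set (Fin N)) : Subalgebra ℝ (MvPolynomial (Idx N) ℝ) :=
  supported ℝ (site ⁻¹' S)

lemma onSites_mono {S T : Set (Fin N)} (h : S ⊆ T) : onSites S ≤ onSites T :=
  supported_mono (Set.preimage_mono h)

lemma poisson_mem_onSites {S T : Set (Fin N)} {p q : MvPolynomial (Idx N) ℝ}
    (hp : p ∈ onSites S) (hq : q ∈ onSites T) : poisson N p q ∈ onSites (S ∪ T) := by
  have hp' := onSites_mono (Set.subset_union_left (t := T)) hp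
  have hq' := onSites_mono (Set.subset_union_right (s := S)) hq
  refine Subalgebra.sum_mem _ fun j _ => Subalgebra.sub_mem _ ?_ ?_ <;>
    exact Subalgebra.mul_mem _ (pderiv_mem_supported _ hp') (pderiv_mem_supported _ hq')

lemma poisson_eq_zero_of_disjoint {S T : Set (Fin N)} {p q : MvPolynomial (Idx N) ℝ}
    (hp : p ∈ onSites S) (hq : q ∈ onSites T) (hST : Disjoint S T) : poisson N p q = 0 := by
  refine Finset.sum_eq_zero fun j _ => ?_
  by_cases hj : j ∈ S
  · have hjT : j ∉ T := hST.notMem_of_mem_left hj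
    rw [pderiv_eq_zero_of_mem_supported (i := .inl j) hq hjT,
      pderiv_eq_zero_of_mem_supported (i := .inr j) hq hjT, mul_zero, mul_zero, sub_zero]
  · rw [pderiv_eq_zero_of_mem_supported (i := .inl j) hp hj,
      pderiv_eq_zero_of_mem_supported (i := .inr j) hp hj, zero_mul, zero_mul, sub_zero]

lemma pnorm_one_eq (p : MvPolynomial (Idx N) ℝ) :
    pnorm 1 p = ∑ d ∈ p.support, |p.coeff d| := by
  simp [pnorm]

lemma pnorm_one_eq_of_support_subset {p : MvPolynomial (Idx N) ℝ} {s : Finset (Idx N →₀ ℕ)}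
    (h : p.support ⊆ s) : pnorm 1 p = ∑ d ∈ s, |p.coeff d| := by
  rw [pnorm_one_eq]
  exact Finset.sum_subset h fun d _ hd => by simp [notMem_support_iff.1 hd]

lemma pnorm_nonneg (p : MvPolynomial (Idx N) ℝ) : 0 ≤ pnorm 1 p := by
  rw [pnorm_one_eq]
  exact Finset.sum_nonneg fun _ _ => abs_nonneg _

lemma pnorm_zero : pnorm 1 (0 : MvPolynomial (Idx N) ℝ) = 0 := by simp [pnorm]

lemma pnorm_add_le (p q : MvPolynomial (Idx N) ℝ) :
    pnorm 1 (p + q) ≤ pnorm 1 p + pnorm 1 q := by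
  classical
  rw [pnorm_one_eq_of_support_subset support_add,
    pnorm_one_eq_of_support_subset Finset.subset_union_left,
    pnorm_one_eq_of_support_subset Finset.subset_union_right, ← Finset.sum_add_distrib]
  exact Finset.sum_le_sum fun d _ => by rw [coeff_add]; exact abs_add_le _ _

lemma pnorm_neg (p : MvPolynomial (Idx N) ℝ) : pnorm 1 (-p) = pnorm 1 p := by
  simp [pnorm_one_eq, support_neg]

lemma pnorm_sub_le (p q : MvPolynomial (Idx N) ℝ) :
    pnorm 1 (p - q) ≤ pnorm 1 p + pnorm 1 q := by
  simpa [sub_eq_add_neg, pnorm_neg] using pnorm_add_le p (-q)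

lemma pnorm_sum_le {ι : Type*} (s : Finset ι) (F : ι → MvPolynomial (Idx N) ℝ) :
    pnorm 1 (∑ i ∈ s, F i) ≤ ∑ i ∈ s, pnorm 1 (F i) :=
  Finset.le_sum_of_subadditive _ pnorm_zero.le pnorm_add_le s F

lemma pnorm_monomial_le (d : Idx N →₀ ℕ) (c : ℝ) : pnorm 1 (monomial d c) ≤ |c| := by
  classical
  rw [pnorm_one_eq_of_support_subset (support_monomial_subset (s := d) (a := c))]
  simp

lemma pnorm_mul_le (p q : MvPolynomial (Idx N) ℝ) :
    pnorm 1 (p * q) ≤ pnorm 1 p * pnorm 1 q := by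
  conv_lhs => rw [p.as_sum, q.as_sum, Finset.sum_mul_sum]
  rw [pnorm_one_eq p, pnorm_one_eq q, Finset.sum_mul_sum]
  refine (pnorm_sum_le _ _).trans (Finset.sum_le_sum fun d _ => ?_)
  refine (pnorm_sum_le _ _).trans (Finset.sum_le_sum fun e _ => ?_)
  rw [monomial_mul, ← abs_mul]
  exact pnorm_monomial_le _ _

lemma pnorm_rename_of_injective {f : Idx N → Idx N} (hf : Function.Injective f)
    (p : MvPolynomial (Idx N) ℝ) : pnorm 1 (rename f p) = pnorm 1 p := by
  classical
  rw [pnorm_one_eq, pnorm_one_eq, support_rename_of_injective hf,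
    Finset.sum_image fun _ _ _ _ h => Finsupp.mapDomain_injective hf h]
  simp only [coeff_rename_mapDomain f hf]

lemma pnorm_pderiv_rename_shift (v : Fin N) (i : Idx N) (q : MvPolynomial (Idx N) ℝ) :
    pnorm 1 (pderiv (shift v i) (rename (shift v) q)) = pnorm 1 (pderiv i q) := by
  rw [pderiv_rename (shift_injective v), pnorm_rename_of_injective (shift_injective v)]

lemma pnorm_homogeneousComponent_le (r : ℕ) (p : MvPolynomial (Idx N) ℝ) :
    pnorm 1 (homogeneousComponent r p) ≤ pnorm 1 p := by
  rw [pnorm_one_eq, pnorm_one_eq, support_homogeneousComponent]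
  refine (Finset.sum_le_sum_of_subset_of_nonneg (Finset.filter_subset _ _)
    fun _ _ _ => abs_nonneg _).trans_eq' (Finset.sum_congr rfl fun d hd => ?_)
  rw [coeff_homogeneousComponent, if_pos (Finset.mem_filter.1 hd).2]

lemma pnorm_pderiv_le (i : Idx N) (p : MvPolynomial (Idx N) ℝ) :
    pnorm 1 (pderiv i p) ≤ ∑ d ∈ p.support, |p.coeff d| * d i := by
  conv_lhs => rw [p.as_sum]
  simp only [map_sum, pderiv_monomial]
  refine (pnorm_sum_le _ _).trans (Finset.sum_le_sum fun d _ => ?_)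
  exact (pnorm_monomial_le _ _).trans_eq (by rw [abs_mul, Nat.abs_cast])

lemma sum_pnorm_pderiv_le {r : ℕ} {p : MvPolynomial (Idx N) ℝ} (hp : p.IsHomogeneous r) :
    ∑ i, pnorm 1 (pderiv i p) ≤ r * pnorm 1 p := by
  have hdeg (d) (hd : d ∈ p.support) : ∑ i, (d i : ℝ) = r := by
    have : d.degree = r := by_contra fun h => mem_support_iff.1 hd (hp.coeff_eq_zero h)
    rw [← this, Finsupp.degree_eq_sum]
    push_cast
    rfl
  calc ∑ i, pnorm 1 (pderiv i p)
      ≤ ∑ i, ∑ d ∈ p.support, |p.coeff d| * d i :=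
        Finset.sum_le_sum fun i _ => pnorm_pderiv_le i p
    _ = r * pnorm 1 p := by
      rw [Finset.sum_comm, pnorm_one_eq, Finset.mul_sum]
      refine Finset.sum_congr rfl fun d hd => ?_
      rw [← Finset.mul_sum, hdeg d hd, mul_comm]

lemma ClassD.exists_isHomogeneous {C σ : ℝ} {r : ℕ} {f : MvPolynomial (Idx N) ℝ}
    (hfD : ClassD N C σ f) (hf : f.IsHomogeneous r) :
    ∃ (M : ℕ) (F : ℕ → MvPolynomial (Idx N) ℝ), f = ∑ m ∈ range M, F m ∧
      (∀ m, SuppIn N m (F m)) ∧ (∀ m, pnorm 1 (F m) ≤ C * exp (-σ * m)) ∧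
      ∀ m, (F m).IsHomogeneous r := by
  obtain ⟨M, comp, rfl, -, hsupp, hnorm⟩ := hfD
  refine ⟨M, fun m => homogeneousComponent r (comp m), ?_, fun m d hd => ?_,
    fun m => (pnorm_homogeneousComponent_le r _).trans (hnorm m),
    fun m => homogeneousComponent_isHomogeneous r _⟩
  · rw [← map_sum, homogeneousComponent_eq_self hf]
  · rw [support_homogeneousComponent] at hd
    exact hsupp m d (Finset.mem_filter.1 hd).1

lemma one_sub_exp_neg_pos {a : ℝ} (ha : 0 < a) : 0 < 1 - exp (-a) :=
  sub_pos.2 (exp_lt_one_iff.2 (neg_neg_iff_pos.2 ha))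

lemma sum_antidiagonal_exp_mul_exp_le_of_lt {a b : ℝ} (hab : a < b) (k : ℕ) :
    ∑ x ∈ antidiagonal k, exp (-a * x.1) * exp (-b * x.2) ≤
      exp (-a * k) / (1 - exp (-(b - a))) := by
  set ρ := exp (-(b - a))
  have hρ : ρ < 1 := by linarith [one_sub_exp_neg_pos (sub_pos.2 hab)]
  have hterm (x : ℕ × ℕ) (hx : x ∈ antidiagonal k) :
      exp (-a * x.1) * exp (-b * x.2) = exp (-a * k) * ρ ^ x.2 := by
    have hk : (k : ℝ) = x.1 + x.2 := by rw [← mem_antidiagonal.1 hx]; push_cast; ring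
    rw [hk, ← exp_nat_mul, ← exp_add, ← exp_add]
    ring_nf
  have hgeom : ∑ x ∈ antidiagonal k, ρ ^ x.2 = ∑ i ∈ range (k + 1), ρ ^ i := by
    rw [← Finset.Nat.sum_antidiagonal_swap]
    exact Finset.Nat.sum_antidiagonal_eq_sum_range_succ_mk (fun x => ρ ^ x.1) k
  calc ∑ x ∈ antidiagonal k, exp (-a * x.1) * exp (-b * x.2)
      = exp (-a * k) * ∑ i ∈ range (k + 1), ρ ^ i := by
        rw [Finset.sum_congr rfl hterm, ← Finset.mul_sum, hgeom]
    _ ≤ exp (-a * k) * (1 / (1 - ρ)) := by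
        refine mul_le_mul_of_nonneg_left ?_ (exp_nonneg _)
        have := geom_sum_Ico_le_of_lt_one (m := 0) (n := k + 1) (exp_nonneg _) hρ
        rwa [← Finset.range_eq_Ico, pow_zero] at this
    _ = exp (-a * k) / (1 - ρ) := mul_one_div _ _

lemma sum_antidiagonal_exp_mul_exp_le {a b : ℝ} (hab : a ≠ b) (k : ℕ) :
    ∑ x ∈ antidiagonal k, exp (-a * x.1) * exp (-b * x.2) ≤
      exp (-min a b * k) / (1 - exp (-|a - b|)) := by
  rcases hab.lt_or_gt with h | h
  · rw [min_eq_left h.le, abs_of_neg (sub_neg.2 h), neg_sub]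
    exact sum_antidiagonal_exp_mul_exp_le_of_lt h k
  · rw [min_eq_right h.le, abs_of_pos (sub_pos.2 h), ← Finset.Nat.sum_antidiagonal_swap]
    simpa only [Prod.fst_swap, Prod.snd_swap, mul_comm] using
      sum_antidiagonal_exp_mul_exp_le_of_lt h k

variable [NeZero N]

lemma sum_range_intCast_add_one {M : Type*} [AddCommMonoid M] (Φ : Fin N → M) :
    ∑ l ∈ range N, Φ (((l : ℤ) + 1 : ℤ) : Fin N) = ∑ v, Φ v := by
  calc ∑ l ∈ range N, Φ (((l : ℤ) + 1 : ℤ) : Fin N)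
      = ∑ w : Fin N, Φ (w + 1) := by
        rw [← Fin.sum_univ_eq_sum_range (fun l => Φ (((l : ℤ) + 1 : ℤ) : Fin N))]
        push_cast
        simp
    _ = ∑ v, Φ v := Equiv.sum_comp (Equiv.addRight 1) Φ

lemma oplus_eq_sum_rename (p : MvPolynomial (Idx N) ℝ) :
    oplus N p = ∑ v, rename (shift v) p :=
  sum_range_intCast_add_one (fun v => rename (shift v) p)

lemma oplus_sum {ι : Type*} (s : Finset ι) (F : ι → MvPolynomial (Idx N) ℝ) :
    oplus N (∑ i ∈ s, F i) = ∑ i ∈ s, oplus N (F i) := by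
  simp only [oplus_eq_sum_rename, map_sum]
  exact Finset.sum_comm

lemma oplus_rename_shift (c : Fin N) (p : MvPolynomial (Idx N) ℝ) :
    oplus N (rename (shift c) p) = oplus N p := by
  simp only [oplus_eq_sum_rename, rename_rename, shift_comp_shift]
  exact Equiv.sum_comp (Equiv.addLeft c) (fun v => rename (shift v) p)

lemma rename_shift_oplus (c : Fin N) (p : MvPolynomial (Idx N) ℝ) :
    rename (shift c) (oplus N p) = oplus N p := by
  simp only [oplus_eq_sum_rename, map_sum, rename_rename, shift_comp_shift]
  exact Equiv.sum_comp (Equiv.addRight c) (fun v => rename (shift v) p)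

lemma poisson_rename_shift (c : Fin N) (p q : MvPolynomial (Idx N) ℝ) :
    poisson N (rename (shift c) p) (rename (shift c) q) = rename (shift c) (poisson N p q) := by
  rw [poisson, poisson, map_sum, ← Equiv.sum_comp (Equiv.addRight c)]
  refine Finset.sum_congr rfl fun j _ => ?_
  simp only [map_sub, map_mul, ← pderiv_rename (shift_injective c)]
  rfl

lemma poisson_oplus_oplus (p q : MvPolynomial (Idx N) ℝ) :
    poisson N (oplus N p) (oplus N q) = oplus N (poisson N p (oplus N q)) := by
  conv_lhs => rw [oplus_eq_sum_rename p, poisson_sum_left]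
  rw [oplus_eq_sum_rename (poisson N p (oplus N q))]
  refine Finset.sum_congr rfl fun v _ => ?_
  rw [← poisson_rename_shift, rename_shift_oplus]

lemma poisson_oplus_sum_oplus_sum {ι κ : Type*} (s : Finset ι) (t : Finset κ)
    (F : ι → MvPolynomial (Idx N) ℝ) (G : κ → MvPolynomial (Idx N) ℝ) :
    poisson N (oplus N (∑ i ∈ s, F i)) (oplus N (∑ j ∈ t, G j)) =
      ∑ x ∈ s ×ˢ t, ∑ v, oplus N (poisson N (F x.1) (rename (shift v) (G x.2))) := by
  rw [poisson_oplus_oplus, poisson_sum_left, oplus_sum, Finset.sum_product]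
  refine Finset.sum_congr rfl fun i _ => ?_
  simp only [oplus_eq_sum_rename (∑ j ∈ t, G j), map_sum, poisson_sum_right, oplus_sum]
  exact Finset.sum_comm

lemma rename_shift_mem_onSites (c : Fin N) {S : Set (Fin N)} {p : MvPolynomial (Idx N) ℝ}
    (hp : p ∈ onSites S) : rename (shift c) p ∈ onSites ((· - c) ⁻¹' S) := by
  classical
  rw [onSites, mem_supported] at hp ⊢
  intro i hi
  obtain ⟨k, hk, rfl⟩ := Finset.mem_image.1 (vars_rename _ _ hi)
  have hsite : site (shift c k) - c = site k := by rw [site_shift]; ring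
  simpa [hsite] using hp hk

def arc (a : Fin N) (len : ℕ) : Set (Fin N) := {j | ∃ t ≤ len, j = a + t}

lemma mem_arc_zero {j : Fin N} {len : ℕ} : j ∈ arc 0 len ↔ (j : ℕ) ≤ len := by
  constructor
  · rintro ⟨t, ht, rfl⟩
    simpa using (Nat.mod_le t N).trans ht
  · exact fun hj => ⟨j, hj, by simp⟩

lemma preimage_sub_arc (c a : Fin N) (len : ℕ) : (· - c) ⁻¹' arc a len = arc (a + c) len := by
  ext j
  simp only [arc, Set.mem_preimage, Set.mem_ofPred_eq]
  refine exists_congr fun t => and_congr_right fun _ => ?_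
  constructor <;> intro h <;> linear_combination h

lemma arc_subset_arc_of_le {a : Fin N} {m n : ℕ} (h : m ≤ n) : arc a m ⊆ arc a n :=
  fun _ ⟨t, ht, hj⟩ => ⟨t, ht.trans h, hj⟩

lemma arc_subset_arc {a b : Fin N} {m n : ℕ} (h : a ∈ arc b m) : arc a n ⊆ arc b (m + n) := by
  obtain ⟨u, hu, rfl⟩ := h
  rintro _ ⟨t, ht, rfl⟩
  exact ⟨u + t, by omega, by push_cast; ring⟩

lemma exists_arc_union_subset {a b : Fin N} {m n : ℕ} (h : (arc b m ∩ arc a n).Nonempty) :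
    ∃ c, arc b m ∪ arc a n ⊆ arc c (m + n) := by
  by_cases ha : a ∈ arc b m
  · exact ⟨b, Set.union_subset (arc_subset_arc_of_le (by omega)) (arc_subset_arc ha)⟩
  -- otherwise the common point can only be reached by wrapping around, which forces `b ∈ arc a n`
  refine ⟨a, Set.union_subset ?_ (arc_subset_arc_of_le (by omega))⟩
  rw [add_comm]
  refine arc_subset_arc ?_
  obtain ⟨j, ⟨u, hu, hj⟩, ⟨v, hv, hj'⟩⟩ := h
  rcases le_or_gt u v with huv | hvu
  · exact ⟨v - u, by omega, by rw [Nat.cast_sub huv]; linear_combination hj' - hj⟩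
  · exact absurd ⟨u - v, by omega, by rw [Nat.cast_sub hvu.le]; linear_combination hj - hj'⟩ ha

lemma suppIn_iff_mem_onSites {m : ℕ} {p : MvPolynomial (Idx N) ℝ} :
    SuppIn N m p ↔ p ∈ onSites (arc 0 m) := by
  simp only [SuppIn, onSites, mem_supported, Set.subset_def, Finset.mem_coe,
    mem_vars_iff_mem_support, Set.mem_preimage, mem_arc_zero, Finsupp.mem_support_iff]
  constructor
  · rintro h (j | j) ⟨d, hd, hj⟩
    exacts [h d hd j (.inl hj), h d hd j (.inr hj)]
  · rintro h d hd j (hj | hj)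
    exacts [h (.inl j) ⟨d, hd, hj⟩, h (.inr j) ⟨d, hd, hj⟩]

lemma exists_rename_shift_poisson_suppIn {m n : ℕ} (v : Fin N) {p q : MvPolynomial (Idx N) ℝ}
    (hp : SuppIn N m p) (hq : SuppIn N n q) :
    ∃ c : Fin N, SuppIn N (m + n) (rename (shift c) (poisson N p (rename (shift v) q))) := by
  rw [suppIn_iff_mem_onSites] at hp hq
  have hq' := rename_shift_mem_onSites v hq
  rw [preimage_sub_arc, zero_add] at hq'
  simp only [suppIn_iff_mem_onSites]
  by_cases h : (arc 0 m ∩ arc v n).Nonempty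
  · obtain ⟨c, hc⟩ := exists_arc_union_subset h
    refine ⟨-c, ?_⟩
    have := rename_shift_mem_onSites (-c) (onSites_mono hc (poisson_mem_onSites hp hq'))
    rwa [preimage_sub_arc, add_neg_cancel] at this
  · refine ⟨0, ?_⟩
    rw [poisson_eq_zero_of_disjoint hp hq'
      (Set.disjoint_iff_inter_eq_empty.2 (Set.not_nonempty_iff_eq_empty.1 h)), map_zero]
    exact Subalgebra.zero_mem _

lemma pnorm_poisson_rename_shift_le (v : Fin N) (p q : MvPolynomial (Idx N) ℝ) :
    pnorm 1 (poisson N p (rename (shift v) q)) ≤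
      ∑ j, (pnorm 1 (pderiv (.inl (j + v)) p) * pnorm 1 (pderiv (.inr j) q) +
        pnorm 1 (pderiv (.inr (j + v)) p) * pnorm 1 (pderiv (.inl j) q)) := by
  rw [poisson, ← Equiv.sum_comp (Equiv.addRight v)]
  refine (pnorm_sum_le _ _).trans (Finset.sum_le_sum fun j _ => ?_)
  refine (pnorm_sub_le _ _).trans (add_le_add ?_ ?_) <;> refine (pnorm_mul_le _ _).trans_eq ?_
  · exact congrArg _ (pnorm_pderiv_rename_shift v (.inr j) q)
  · exact congrArg _ (pnorm_pderiv_rename_shift v (.inl j) q)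

lemma sum_pnorm_poisson_rename_shift_le {r r' : ℕ} {p q : MvPolynomial (Idx N) ℝ}
    (hp : p.IsHomogeneous r) (hq : q.IsHomogeneous r') :
    ∑ v, pnorm 1 (poisson N p (rename (shift v) q)) ≤ r * pnorm 1 p * (r' * pnorm 1 q) := by
  set a : Idx N → ℝ := fun i => pnorm 1 (pderiv i p)
  set b : Idx N → ℝ := fun i => pnorm 1 (pderiv i q)
  have hcyc (j : Fin N) (φ : Fin N → ℝ) : ∑ v, φ (j + v) = ∑ v, φ v :=
    Equiv.sum_comp (Equiv.addLeft j) φ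
  have ha := sum_pnorm_pderiv_le hp
  have hb := sum_pnorm_pderiv_le hq
  rw [Fintype.sum_sum_type] at ha hb
  have ha₀ (i) : 0 ≤ a i := pnorm_nonneg _
  have hb₀ (i) : 0 ≤ b i := pnorm_nonneg _
  calc ∑ v, pnorm 1 (poisson N p (rename (shift v) q))
      ≤ ∑ v, ∑ j, (a (.inl (j + v)) * b (.inr j) + a (.inr (j + v)) * b (.inl j)) :=
        Finset.sum_le_sum fun v _ => pnorm_poisson_rename_shift_le v p q
    _ = (∑ j, a (.inl j)) * ∑ j, b (.inr j) + (∑ j, a (.inr j)) * ∑ j, b (.inl j) := by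
        rw [Finset.sum_comm, Finset.mul_sum, Finset.mul_sum, ← Finset.sum_add_distrib]
        refine Finset.sum_congr rfl fun j _ => ?_
        rw [Finset.sum_add_distrib, ← Finset.sum_mul, ← Finset.sum_mul,
          hcyc j fun w => a (.inl w), hcyc j fun w => a (.inr w)]
    _ ≤ (∑ j, a (.inl j) + ∑ j, a (.inr j)) * (∑ j, b (.inl j) + ∑ j, b (.inr j)) := by
        have := Finset.sum_nonneg fun j (_ : j ∈ univ) => ha₀ (.inl j)
        have := Finset.sum_nonneg fun j (_ : j ∈ univ) => ha₀ (.inr j)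
        have := Finset.sum_nonneg fun j (_ : j ∈ univ) => hb₀ (.inl j)
        have := Finset.sum_nonneg fun j (_ : j ∈ univ) => hb₀ (.inr j)
        nlinarith
    _ ≤ r * pnorm 1 p * (r' * pnorm 1 q) :=
        mul_le_mul ha hb (add_nonneg (Finset.sum_nonneg fun j _ => hb₀ _)
          (Finset.sum_nonneg fun j _ => hb₀ _))
          (mul_nonneg (Nat.cast_nonneg _) (pnorm_nonneg _))

/-- `c` realigns each bracket so that it becomes left aligned
(see `exists_rename_shift_poisson_suppIn`). -/
noncomputable def bracketSeed (F G : ℕ → MvPolynomial (Idx N) ℝ)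
    (c : ℕ → ℕ → Fin N → Fin N) (s : Finset (ℕ × ℕ)) : MvPolynomial (Idx N) ℝ :=
  ∑ x ∈ s, ∑ v, rename (shift (c x.1 x.2 v)) (poisson N (F x.1) (rename (shift v) (G x.2)))

section bracketSeed

variable (F G : ℕ → MvPolynomial (Idx N) ℝ) (c : ℕ → ℕ → Fin N → Fin N)

lemma oplus_bracketSeed (s : Finset (ℕ × ℕ)) :
    oplus N (bracketSeed F G c s) =
      ∑ x ∈ s, ∑ v, oplus N (poisson N (F x.1) (rename (shift v) (G x.2))) := by
  simp only [bracketSeed, oplus_sum, oplus_rename_shift]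

lemma suppIn_bracketSeed {k : ℕ} {s : Finset (ℕ × ℕ)} (hs : s ⊆ antidiagonal k)
    (hc : ∀ m n v, SuppIn N (m + n) (rename (shift (c m n v))
      (poisson N (F m) (rename (shift v) (G n))))) :
    SuppIn N k (bracketSeed F G c s) := by
  rw [suppIn_iff_mem_onSites]
  refine Subalgebra.sum_mem _ fun x hx => Subalgebra.sum_mem _ fun v _ => ?_
  rw [← suppIn_iff_mem_onSites, ← mem_antidiagonal.1 (hs hx)]
  exact hc x.1 x.2 v

lemma pnorm_bracketSeed_le {r r' : ℕ} {Cf Cg σ' σ'' : ℝ} (hCf : 0 ≤ Cf) (hCg : 0 ≤ Cg)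
    (hF : ∀ m, (F m).IsHomogeneous r) (hG : ∀ n, (G n).IsHomogeneous r')
    (hF_norm : ∀ m, pnorm 1 (F m) ≤ Cf * exp (-σ' * m))
    (hG_norm : ∀ n, pnorm 1 (G n) ≤ Cg * exp (-σ'' * n))
    {k : ℕ} {s : Finset (ℕ × ℕ)} (hs : s ⊆ antidiagonal k) :
    pnorm 1 (bracketSeed F G c s) ≤
      r * r' * Cf * Cg * ∑ x ∈ antidiagonal k, exp (-σ' * x.1) * exp (-σ'' * x.2) := by
  have hterm (x : ℕ × ℕ) :
      pnorm 1 (∑ v, rename (shift (c x.1 x.2 v))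
          (poisson N (F x.1) (rename (shift v) (G x.2)))) ≤
        r * r' * Cf * Cg * (exp (-σ' * x.1) * exp (-σ'' * x.2)) :=
    calc _ ≤ ∑ v, pnorm 1 (poisson N (F x.1) (rename (shift v) (G x.2))) := by
          refine (pnorm_sum_le _ _).trans_eq ?_
          simp only [pnorm_rename_of_injective (shift_injective _)]
      _ ≤ r * pnorm 1 (F x.1) * (r' * pnorm 1 (G x.2)) :=
          sum_pnorm_poisson_rename_shift_le (hF x.1) (hG x.2)
      _ = r * r' * (pnorm 1 (F x.1) * pnorm 1 (G x.2)) := by ring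
      _ ≤ r * r' * (Cf * exp (-σ' * x.1) * (Cg * exp (-σ'' * x.2))) :=
          mul_le_mul_of_nonneg_left (mul_le_mul (hF_norm x.1) (hG_norm x.2)
            (pnorm_nonneg _) (by positivity)) (by positivity)
      _ = r * r' * Cf * Cg * (exp (-σ' * x.1) * exp (-σ'' * x.2)) := by ring
  rw [Finset.mul_sum]
  exact (pnorm_sum_le _ _).trans ((Finset.sum_le_sum fun x _ => hterm x).trans
    (Finset.sum_le_sum_of_subset_of_nonneg hs fun _ _ _ => by positivity))

end bracketSeed

theorem poisson_classD_ne_general (N : ℕ) [NeZero N]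
    (r' r'' : ℕ) (f g : MvPolynomial (Idx N) ℝ)
    (hf : f.IsHomogeneous r') (hg : g.IsHomogeneous r'')
    (Cf Cg σ' σ'' : ℝ) (hCf : 0 < Cf) (hCg : 0 < Cg)
    (hσ' : 0 < σ') (hne : σ' ≠ σ'')
    (hfD : ClassD N Cf σ' f) (hgD : ClassD N Cg σ'' g) :
    ∃ h : MvPolynomial (Idx N) ℝ,
      oplus N h = poisson N (oplus N f) (oplus N g) ∧
      ClassD N
        (r' * r'' * Cf * Cg /
          ((1 - Real.exp (-max σ' σ'')) * (1 - Real.exp (-|σ' - σ''|))))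
        (min σ' σ'') h := by
  obtain ⟨M₁, F, rfl, hF_supp, hF_norm, hF_hom⟩ := hfD.exists_isHomogeneous hf
  obtain ⟨M₂, G, rfl, hG_supp, hG_norm, hG_hom⟩ := hgD.exists_isHomogeneous hg
  choose c hc using fun m n v => exists_rename_shift_poisson_suppIn v (hF_supp m) (hG_supp n)
  let P (k : ℕ) : Finset (ℕ × ℕ) := {x ∈ range M₁ ×ˢ range M₂ | x.1 + x.2 = k}
  have hP (k : ℕ) : P k ⊆ antidiagonal k := fun x hx =>
    mem_antidiagonal.2 (Finset.mem_filter.1 hx).2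
  refine ⟨∑ k ∈ range (M₁ + M₂), bracketSeed F G c (P k), ?_, M₁ + M₂,
    fun k => bracketSeed F G c (P k), rfl, fun k hk => ?_,
    fun k => suppIn_bracketSeed F G c (hP k) hc, fun k => ?_⟩
  · rw [poisson_oplus_sum_oplus_sum, oplus_sum]
    simp only [oplus_bracketSeed]
    refine Finset.sum_fiberwise_of_maps_to (fun x hx => ?_) _
    simp only [Finset.mem_product, Finset.mem_range] at hx ⊢
    omega
  · refine Finset.sum_eq_zero fun x hx => ?_
    simp only [P, Finset.mem_filter, Finset.mem_product, Finset.mem_range] at hx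
    omega
  · have hΔ := one_sub_exp_neg_pos (abs_pos.2 (sub_ne_zero.2 hne))
    calc pnorm 1 (bracketSeed F G c (P k))
        ≤ r' * r'' * Cf * Cg * ∑ x ∈ antidiagonal k, exp (-σ' * x.1) * exp (-σ'' * x.2) :=
          pnorm_bracketSeed_le F G c hCf.le hCg.le hF_hom hG_hom hF_norm hG_norm (hP k)
      _ ≤ r' * r'' * Cf * Cg * (exp (-min σ' σ'' * k) / (1 - exp (-|σ' - σ''|))) :=
          mul_le_mul_of_nonneg_left (sum_antidiagonal_exp_mul_exp_le hne k) (by positivity)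
      _ ≤ r' * r'' * Cf * Cg * (exp (-min σ' σ'' * k) / (1 - exp (-|σ' - σ''|))) /
            (1 - exp (-max σ' σ'')) :=
          le_div_self (mul_nonneg (by positivity) (div_nonneg (exp_nonneg _) hΔ.le))
            (one_sub_exp_neg_pos (lt_max_of_lt_left hσ')) (sub_le_self _ (exp_nonneg _))
      _ = _ := by rw [mul_comm (1 - exp (-max σ' σ'')), ← div_div]; ring

/-- Let `F = f^⊕`, `G = g^⊕` be cyclically symmetric homogeneous
polynomials of degrees `r', r''` with seeds `f ∈ D(C_f,σ')`, `g ∈ D(C_g,σ'')`, `σ' ≠ σ''`.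
Then `{F,G}` admits a seed `h` of class `D(C_h, min(σ',σ''))` with
`C_h = r' r'' C_f C_g / ((1−e^{−max(σ',σ'')})(1−e^{−|σ'−σ''|}))`. -/
theorem poisson_classD_ne (N : ℕ) [NeZero N]
    (r' r'' : ℕ) (f g : MvPolynomial (Idx N) ℝ)
    (hf : f.IsHomogeneous r') (hg : g.IsHomogeneous r'')
    (Cf Cg σ' σ'' : ℝ) (hCf : 0 < Cf) (hCg : 0 < Cg)
    (hσ' : 0 < σ') (hσ'' : 0 < σ'') (hne : σ' ≠ σ'')
    (hfD : ClassD N Cf σ' f) (hgD : ClassD N Cg σ'' g) :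
    ∃ h : MvPolynomial (Idx N) ℝ,
      oplus N h = poisson N (oplus N f) (oplus N g) ∧
      ClassD N
        (r' * r'' * Cf * Cg /
          ((1 - Real.exp (-max σ' σ'')) * (1 - Real.exp (-|σ' - σ''|))))
        (min σ' σ'') h :=
  poisson_classD_ne_general N r' r'' f g hf hg Cf Cg σ' σ'' hCf hCg hσ' hne hfD hgD
end

section
/- Let 𝒳 = χ^⊕ with χ a homogeneous polynomial of degree r+1 (r ≥ 1) and F = f^⊕ with f a homogeneous polynomial of degree s+1 (s ≥ 1), both cyclically symmetric functions on ℝ^N × ℝ^N. Define the Lie derivative of the vector field X_F along X_𝒳 by (L_𝒳 X_F)(z) := dX_F(z)[X_𝒳(z)]. Then for every z ∈ ℝ^{2N} one has ‖(L_𝒳 X_F)(z)‖ ≤ s |X_F|_1 |X_𝒳|_1 ‖z‖^{s+r−1}, where ‖·‖ is either the Euclidean (ℓ²) or the supremum (ℓ^∞) norm on ℝ^{2N}. -/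
open MvPolynomial Finset Real

/-- the norm `|X_F|_R := ‖X_1‖_R + ‖X_{N+1}‖_R` of the Hamiltonian vector field
`X_F = J∇F` (here `X_1 = ∂F/∂y_1` and `X_{N+1} = −∂F/∂x_1`). -/
noncomputable def hamNorm (N : ℕ) [NeZero N] (R : ℝ) (F : MvPolynomial (Idx N) ℝ) : ℝ :=
  pnorm R (pderiv (Sum.inr 0) F) + pnorm R (-pderiv (Sum.inl 0) F)

/-- the Hamiltonian vector field `X_F = J∇F` as a map on the phase space `ℝ^{2N}`:
`ẋ_j = ∂F/∂y_j`, `ẏ_j = −∂F/∂x_j`. -/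
noncomputable def Xvec (N : ℕ) (F : MvPolynomial (Idx N) ℝ) (z : Idx N → ℝ) : Idx N → ℝ :=
  Sum.elim (fun j => eval z (pderiv (Sum.inr j) F)) (fun j => -eval z (pderiv (Sum.inl j) F))

/-- the euclidean (`ℓ²`) norm on `ℝ^{2N}`; the supremum (`ℓ^∞`) norm is the `Pi` norm `‖·‖`. -/
noncomputable def enorm {N : ℕ} (z : Idx N → ℝ) : ℝ :=
  Real.sqrt (∑ l, z l ^ 2)

/-!
The components of `dX_F[X_𝒳]` are the polynomials `Qₖ = ∑ₗ ∂ₗ(X_F)ₖ · (X_𝒳)ₗ`, homogeneous of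
degree `s + r - 1`. Cyclic symmetry of `F` and `𝒳` makes the families `(X_𝒳)ₗ` and `Qₖ`
shift-equivariant, so each member has the ℓ¹ coefficient norm of its `x₁`- or `y₁`-member; with the
ℓ¹ form `∑ₗ ‖∂ₗp‖₁ ≤ (deg p) ‖p‖₁` of Euler's identity this gives
`‖Q_{x₁}‖₁ + ‖Q_{y₁}‖₁ ≤ s |X_F|₁ |X_𝒳|₁`. The sup-norm bound then follows from
`|p(z)| ≤ ‖p‖₁ ‖z‖_∞^(deg p)`. For the euclidean norm, the `x`-half of the vector is
`j ↦ Q_{x₁}(τʲz)`; for a monomial `m` of positive degree, factoring off one variable `zᵢ` gives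
`∑ⱼ m(τʲz)² ≤ ‖z‖₂^(2 deg m)`, and the triangle inequality in `ℓ²` over the monomials of
`Q_{x₁}` finishes the proof.
-/

open ContinuousLinearMap

namespace MvPolynomial

variable {σ : Type*}

noncomputable def l1Norm (p : MvPolynomial σ ℝ) : ℝ := ∑ d ∈ p.support, |p.coeff d|

lemma l1Norm_eq_sum_of_support_subset {p : MvPolynomial σ ℝ} {T : Finset (σ →₀ ℕ)}
    (h : p.support ⊆ T) : l1Norm p = ∑ d ∈ T, |p.coeff d| :=
  Finset.sum_subset h fun d _ hd => by simp [notMem_support_iff.1 hd]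

lemma l1Norm_nonneg (p : MvPolynomial σ ℝ) : 0 ≤ l1Norm p :=
  Finset.sum_nonneg fun _ _ => abs_nonneg _

@[simp]
lemma l1Norm_zero : l1Norm (0 : MvPolynomial σ ℝ) = 0 := by
  simp [l1Norm]

lemma l1Norm_add_le (p q : MvPolynomial σ ℝ) : l1Norm (p + q) ≤ l1Norm p + l1Norm q := by
  classical
  rw [l1Norm_eq_sum_of_support_subset support_add,
    l1Norm_eq_sum_of_support_subset (Finset.subset_union_left (s₂ := q.support)),
    l1Norm_eq_sum_of_support_subset (Finset.subset_union_right (s₁ := p.support)),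
    ← Finset.sum_add_distrib]
  exact Finset.sum_le_sum fun d _ => by simpa using abs_add_le _ _

lemma l1Norm_sum_le {ι : Type*} (T : Finset ι) (g : ι → MvPolynomial σ ℝ) :
    l1Norm (∑ i ∈ T, g i) ≤ ∑ i ∈ T, l1Norm (g i) :=
  Finset.le_sum_of_subadditive _ l1Norm_zero.le l1Norm_add_le T g

lemma l1Norm_monomial_le (d : σ →₀ ℕ) (c : ℝ) : l1Norm (monomial d c) ≤ |c| := by
  classical
  rw [l1Norm_eq_sum_of_support_subset support_monomial_subset]
  simp

lemma l1Norm_mul_monomial_le (p : MvPolynomial σ ℝ) (d : σ →₀ ℕ) (c : ℝ) :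
    l1Norm (p * monomial d c) ≤ l1Norm p * |c| := by
  classical
  have hsub : (p * monomial d c).support ⊆ p.support.image (· + d) := by
    intro x hx
    obtain ⟨a, ha, b, hb, rfl⟩ := Finset.mem_add.1 (support_mul _ _ hx)
    rw [Finset.mem_singleton.1 (support_monomial_subset hb)]
    exact Finset.mem_image_of_mem _ ha
  rw [l1Norm_eq_sum_of_support_subset hsub,
    Finset.sum_image fun _ _ _ _ h => add_right_cancel h, l1Norm, Finset.sum_mul]
  simp only [coeff_mul_monomial, abs_mul, le_refl]

lemma l1Norm_mul_le (p q : MvPolynomial σ ℝ) : l1Norm (p * q) ≤ l1Norm p * l1Norm q := by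
  conv_lhs => rw [q.as_sum, Finset.mul_sum]
  calc _ ≤ ∑ d ∈ q.support, l1Norm (p * monomial d (q.coeff d)) := l1Norm_sum_le _ _
    _ ≤ ∑ d ∈ q.support, l1Norm p * |q.coeff d| :=
      Finset.sum_le_sum fun d _ => l1Norm_mul_monomial_le p d _
    _ = l1Norm p * l1Norm q := (Finset.mul_sum ..).symm

lemma l1Norm_rename {τ : Type*} {e : σ → τ} (he : Function.Injective e)
    (p : MvPolynomial σ ℝ) : l1Norm (rename e p) = l1Norm p := by
  classical
  rw [l1Norm, support_rename_of_injective he,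
    Finset.sum_image fun _ _ _ _ h => Finsupp.mapDomain_injective he h]
  exact Finset.sum_congr rfl fun d _ => by rw [coeff_rename_mapDomain e he]

lemma l1Norm_pderiv_le (p : MvPolynomial σ ℝ) (l : σ) :
    l1Norm (pderiv l p) ≤ ∑ d ∈ p.support, |p.coeff d| * d l := by
  conv_lhs => rw [p.as_sum, map_sum]
  refine (l1Norm_sum_le _ _).trans (Finset.sum_le_sum fun d _ => ?_)
  rw [pderiv_monomial]
  exact (l1Norm_monomial_le _ _).trans (by rw [abs_mul, Nat.abs_cast])

lemma sum_l1Norm_pderiv_le [Fintype σ] {p : MvPolynomial σ ℝ} {n : ℕ}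
    (hp : p.IsHomogeneous n) : ∑ l : σ, l1Norm (pderiv l p) ≤ n * l1Norm p := by
  refine (Finset.sum_le_sum fun l _ => l1Norm_pderiv_le p l).trans (le_of_eq ?_)
  rw [Finset.sum_comm, l1Norm, Finset.mul_sum]
  refine Finset.sum_congr rfl fun d hd => ?_
  rw [← Finset.mul_sum, hp.degree_eq_sum_deg_support hd, ← Finsupp.degree_apply,
    Finsupp.degree_eq_sum, Nat.cast_sum, mul_comm]

lemma hasFDerivAt_eval [Fintype σ] (p : MvPolynomial σ ℝ) (z : σ → ℝ) :
    HasFDerivAt (fun w : σ → ℝ => eval w p)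
      (∑ l : σ, eval z (pderiv l p) • (proj l : (σ → ℝ) →L[ℝ] ℝ)) z := by
  classical
  induction p using MvPolynomial.induction_on with
  | C a => simpa using hasFDerivAt_const a z
  | add p q hp hq =>
    simp only [map_add, add_smul, Finset.sum_add_distrib]
    exact hp.add hq
  | mul_X p n hp =>
    simp only [eval_mul, eval_X]
    refine (hp.mul (hasFDerivAt_apply n z)).congr_fderiv ?_
    ext v
    simp [Derivation.leibniz, pderiv_X, Pi.single_apply, apply_ite, mul_add, Finset.sum_add_distrib,
      Finset.mul_sum, mul_comm, mul_left_comm]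

lemma abs_prod_pow_le {w : σ → ℝ} {M : ℝ} (h : ∀ i, |w i| ≤ M) (m : σ →₀ ℕ) :
    |m.prod fun i k => w i ^ k| ≤ M ^ m.degree := by
  rw [Finsupp.prod, Finset.abs_prod, Finsupp.degree_apply, ← Finset.prod_pow_eq_pow_sum]
  exact Finset.prod_le_prod (fun _ _ => abs_nonneg _)
    fun i _ => (abs_pow _ _).trans_le (pow_le_pow_left₀ (abs_nonneg _) (h i) _)

lemma abs_eval_le_of_isHomogeneous {p : MvPolynomial σ ℝ} {n : ℕ} (hp : p.IsHomogeneous n)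
    {w : σ → ℝ} {M : ℝ} (h : ∀ i, |w i| ≤ M) :
    |eval w p| ≤ l1Norm p * M ^ n := by
  conv_lhs => rw [p.as_sum, map_sum]
  rw [l1Norm, Finset.sum_mul]
  refine (Finset.abs_sum_le_sum_abs _ _).trans (Finset.sum_le_sum fun d hd => ?_)
  rw [eval_monomial, abs_mul, hp.degree_eq_sum_deg_support hd]
  exact mul_le_mul_of_nonneg_left (abs_prod_pow_le h d) (abs_nonneg _)

lemma sum_sq_prod_pow_comp_le [Fintype σ] {ι : Type*} [Fintype ι] {m : σ →₀ ℕ} (hm : m ≠ 0)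
    (z : σ → ℝ) {e : ι → σ → σ} (he : ∀ i, Function.Injective fun j => e j i) :
    ∑ j, (m.prod fun i k => z (e j i) ^ k) ^ 2 ≤ (∑ l, z l ^ 2) ^ m.degree := by
  classical
  set S := ∑ l, z l ^ 2
  have hS : 0 ≤ S := Finset.sum_nonneg fun l _ => sq_nonneg (z l)
  obtain ⟨i₀, hi₀⟩ := Finsupp.ne_iff.1 hm
  set m' := m - Finsupp.single i₀ 1
  have hsplit : m = m' + Finsupp.single i₀ 1 :=
    (tsub_add_cancel_of_le (Finsupp.single_le_iff.2 (Nat.one_le_iff_ne_zero.2 hi₀))).symm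
  have hz : ∀ l, |z l| ≤ √S := fun l =>
    Real.abs_le_sqrt (Finset.single_le_sum (fun l _ => sq_nonneg (z l)) (Finset.mem_univ l))
  have hprod : ∀ j, (m.prod fun i k => z (e j i) ^ k) ^ 2 ≤ S ^ m'.degree * z (e j i₀) ^ 2 := by
    intro j
    rw [hsplit, Finsupp.prod_add_index' (fun _ => pow_zero _) (fun _ _ _ => pow_add _ _ _)]
    simp only [Finsupp.prod_single_index, pow_zero, pow_one, mul_pow]
    refine mul_le_mul_of_nonneg_right ?_ (sq_nonneg _)
    rw [← sq_abs, ← Real.sq_sqrt hS, ← pow_mul, mul_comm, pow_mul]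
    exact pow_le_pow_left₀ (abs_nonneg _) (abs_prod_pow_le (fun i => hz (e j i)) m') 2
  have hshift : ∑ j, z (e j i₀) ^ 2 ≤ S :=
    calc ∑ j, z (e j i₀) ^ 2 = ∑ l ∈ Finset.univ.image (e · i₀), z l ^ 2 :=
          (Finset.sum_image (f := fun l => z l ^ 2) fun j _ j' _ h => he i₀ h).symm
      _ ≤ S := Finset.sum_le_sum_of_subset_of_nonneg (Finset.subset_univ _)
          fun l _ _ => sq_nonneg (z l)
  calc _ ≤ ∑ j, S ^ m'.degree * z (e j i₀) ^ 2 := Finset.sum_le_sum fun j _ => hprod j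
    _ ≤ S ^ m'.degree * S := by
      rw [← Finset.mul_sum]
      exact mul_le_mul_of_nonneg_left hshift (pow_nonneg hS _)
    _ = S ^ m.degree := by rw [hsplit, map_add, Finsupp.degree_single, pow_succ]

lemma sqrt_sum_sq_eval_comp_le [Fintype σ] {ι : Type*} [Fintype ι] {Q : MvPolynomial σ ℝ}
    {d : ℕ} (hd : d ≠ 0) (hQ : Q.IsHomogeneous d) (z : σ → ℝ) {e : ι → σ → σ}
    (he : ∀ i, Function.Injective fun j => e j i) :
    √(∑ j, eval (z ∘ e j) Q ^ 2) ≤ l1Norm Q * √(∑ l, z l ^ 2) ^ d := by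
  set S := ∑ l, z l ^ 2
  let u : (σ →₀ ℕ) → EuclideanSpace ℝ ι :=
    fun m => WithLp.toLp 2 fun j => eval (z ∘ e j) (monomial m (Q.coeff m))
  have hu : ∀ m ∈ Q.support, ‖u m‖ ≤ |Q.coeff m| * √S ^ d := by
    intro m hm
    have hdeg : m.degree = d := (hQ.degree_eq_sum_deg_support hm).symm
    have hm0 : m ≠ 0 := by
      rintro rfl
      exact hd (by simpa using hdeg.symm)
    rw [← pow_le_pow_iff_left₀ (norm_nonneg _) (by positivity) two_ne_zero,
      EuclideanSpace.real_norm_sq_eq, mul_pow, sq_abs, ← pow_mul, mul_comm d, pow_mul,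
      Real.sq_sqrt (Finset.sum_nonneg fun l _ => sq_nonneg _), ← hdeg]
    simp only [u, eval_monomial, mul_pow, ← Finset.mul_sum]
    exact mul_le_mul_of_nonneg_left (sum_sq_prod_pow_comp_le hm0 z he) (sq_nonneg _)
  have hv : ∀ j, (∑ m ∈ Q.support, u m) j = eval (z ∘ e j) Q := fun j => by
    conv_rhs => rw [Q.as_sum, map_sum]
    simp [u, WithLp.ofLp_sum, Finset.sum_apply]
  calc √(∑ j, eval (z ∘ e j) Q ^ 2) = ‖∑ m ∈ Q.support, u m‖ := by
        simp only [EuclideanSpace.norm_eq, Real.norm_eq_abs, sq_abs, hv]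
    _ ≤ ∑ m ∈ Q.support, ‖u m‖ := norm_sum_le _ _
    _ ≤ l1Norm Q * √S ^ d := by
      rw [l1Norm, Finset.sum_mul]
      exact Finset.sum_le_sum hu

end MvPolynomial

lemma sqrt_add_le_sqrt_add_sqrt {a b : ℝ} (ha : 0 ≤ a) (hb : 0 ≤ b) : √(a + b) ≤ √a + √b :=
  Real.sqrt_le_iff.2 ⟨by positivity, by
    nlinarith [Real.sq_sqrt ha, Real.sq_sqrt hb, Real.sqrt_nonneg a, Real.sqrt_nonneg b]⟩

noncomputable def hamField (N : ℕ) (F : MvPolynomial (Idx N) ℝ) : Idx N → MvPolynomial (Idx N) ℝ :=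
  Sum.elim (fun j => pderiv (Sum.inr j) F) (fun j => -pderiv (Sum.inl j) F)

noncomputable def lieField (N : ℕ) (F G : MvPolynomial (Idx N) ℝ) (k : Idx N) :
    MvPolynomial (Idx N) ℝ :=
  ∑ l, pderiv l (hamField N F k) * hamField N G l

lemma Xvec_eq_eval_hamField {N : ℕ} (F : MvPolynomial (Idx N) ℝ) :
    Xvec N F = fun z k => eval z (hamField N F k) := by
  funext z k
  cases k <;> simp [Xvec, hamField]

lemma fderiv_Xvec_apply_Xvec {N : ℕ} (F G : MvPolynomial (Idx N) ℝ) (z : Idx N → ℝ) :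
    fderiv ℝ (Xvec N F) z (Xvec N G z) = fun k => eval z (lieField N F G k) := by
  have hD : HasFDerivAt (Xvec N F) (ContinuousLinearMap.pi fun k =>
      ∑ l, eval z (pderiv l (hamField N F k)) • (proj l : (Idx N → ℝ) →L[ℝ] ℝ)) z := by
    rw [Xvec_eq_eval_hamField]
    exact hasFDerivAt_pi.2 fun k => hasFDerivAt_eval _ z
  rw [hD.fderiv, Xvec_eq_eval_hamField G]
  funext k
  simp [lieField, mul_comm]

lemma hamField_isHomogeneous {N n : ℕ} {F : MvPolynomial (Idx N) ℝ} (hF : F.IsHomogeneous (n + 1))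
    (k : Idx N) : (hamField N F k).IsHomogeneous n := by
  cases k with
  | inl j => simpa [hamField] using hF.pderiv (i := Sum.inr j)
  | inr j => simpa [hamField] using (hF.pderiv (i := Sum.inl j)).neg

lemma lieField_isHomogeneous {N r s : ℕ} {F G : MvPolynomial (Idx N) ℝ} (hs : 1 ≤ s)
    (hF : F.IsHomogeneous (s + 1)) (hG : G.IsHomogeneous (r + 1)) (k : Idx N) :
    (lieField N F G k).IsHomogeneous (s + r - 1) := by
  refine IsHomogeneous.sum _ _ _ fun l _ => ?_
  rw [show s + r - 1 = s - 1 + r by omega]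
  exact (hamField_isHomogeneous hF k).pderiv.mul (hamField_isHomogeneous hG l)

section Cyclic

variable {N : ℕ} [NeZero N]

/-- `shift N t` is `τ^t` on indices: `xⱼ ↦ x_{j+t}`, `yⱼ ↦ y_{j+t}`. -/
def shift (N : ℕ) [NeZero N] (t : Fin N) : Idx N ≃ Idx N :=
  Equiv.sumCongr (Equiv.addRight t) (Equiv.addRight t)

@[simp]
lemma shift_inl (t j : Fin N) : shift N t (Sum.inl j) = Sum.inl (j + t) := rfl

@[simp]
lemma shift_inr (t j : Fin N) : shift N t (Sum.inr j) = Sum.inr (j + t) := rfl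

lemma shift_zero_inl (j : Fin N) : shift N j (Sum.inl 0) = Sum.inl j := by simp

lemma shift_zero_inr (j : Fin N) : shift N j (Sum.inr 0) = Sum.inr j := by simp

lemma shift_injective_left (k : Idx N) : Function.Injective fun t => shift N t k := by
  intro t t' h
  cases k <;> simpa using h

lemma rename_shift_rename_shift (t c : Fin N) (f : MvPolynomial (Idx N) ℝ) :
    rename (shift N c) (rename (shift N t) f) = rename (shift N (t + c)) f := by
  rw [rename_rename]
  congr 2
  funext k
  cases k <;> simp [add_assoc]

open Fin.CommRing in
lemma oplus_eq_sum_rename_shift (f : MvPolynomial (Idx N) ℝ) :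
    oplus N f = ∑ t : Fin N, rename (shift N t) f := by
  rw [oplus, ← Fin.sum_univ_eq_sum_range (fun l => tauPow N ((l : ℤ) + 1) f)]
  refine Fintype.sum_equiv (Equiv.addRight 1) _ _ fun t => ?_
  rw [tauPow]
  congr 2
  funext k
  cases k <;> simp

def ShiftInvariant (F : MvPolynomial (Idx N) ℝ) : Prop :=
  ∀ t, rename (shift N t) F = F

def ShiftEquivariant (P : Idx N → MvPolynomial (Idx N) ℝ) : Prop :=
  ∀ t k, P (shift N t k) = rename (shift N t) (P k)

lemma shiftInvariant_oplus (f : MvPolynomial (Idx N) ℝ) : ShiftInvariant (oplus N f) := by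
  intro c
  simp only [oplus_eq_sum_rename_shift, map_sum, rename_shift_rename_shift]
  exact Fintype.sum_equiv (Equiv.addRight c) _ _ fun t => rfl

lemma oplus_isHomogeneous {n : ℕ} {f : MvPolynomial (Idx N) ℝ} (hf : f.IsHomogeneous n) :
    (oplus N f).IsHomogeneous n :=
  IsHomogeneous.sum _ _ _ fun _ _ => hf.rename_isHomogeneous

lemma hamField_shiftEquivariant {F : MvPolynomial (Idx N) ℝ} (hF : ShiftInvariant F) :
    ShiftEquivariant (hamField N F) := by
  intro t k
  cases k with
  | inl j => simp [hamField, ← pderiv_rename (shift N t).injective, hF t]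
  | inr j => simp [hamField, ← pderiv_rename (shift N t).injective, hF t]

lemma lieField_shiftEquivariant {F G : MvPolynomial (Idx N) ℝ} (hF : ShiftInvariant F)
    (hG : ShiftInvariant G) : ShiftEquivariant (lieField N F G) := by
  intro t k
  rw [lieField, lieField, map_sum, hamField_shiftEquivariant hF]
  refine (Fintype.sum_equiv (shift N t) _ _ fun l => ?_).symm
  rw [map_mul, hamField_shiftEquivariant hG, pderiv_rename (shift N t).injective]

lemma ShiftEquivariant.l1Norm_le {P : Idx N → MvPolynomial (Idx N) ℝ} (hP : ShiftEquivariant P)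
    (k : Idx N) : l1Norm (P k) ≤ l1Norm (P (Sum.inl 0)) + l1Norm (P (Sum.inr 0)) := by
  cases k with
  | inl j =>
    rw [← shift_zero_inl j, hP, l1Norm_rename (shift N j).injective]
    exact le_add_of_nonneg_right (l1Norm_nonneg _)
  | inr j =>
    rw [← shift_zero_inr j, hP, l1Norm_rename (shift N j).injective]
    exact le_add_of_nonneg_left (l1Norm_nonneg _)

lemma hamNorm_one_eq (F : MvPolynomial (Idx N) ℝ) :
    hamNorm N 1 F = l1Norm (hamField N F (Sum.inl 0)) + l1Norm (hamField N F (Sum.inr 0)) := by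
  simp [hamNorm, pnorm, hamField, l1Norm]

lemma l1Norm_lieField_le {s : ℕ} {F G : MvPolynomial (Idx N) ℝ} (hF : F.IsHomogeneous (s + 1))
    (hG : ShiftInvariant G) (k : Idx N) :
    l1Norm (lieField N F G k) ≤ s * l1Norm (hamField N F k) * hamNorm N 1 G := by
  have hG' : ∀ l, l1Norm (hamField N G l) ≤ hamNorm N 1 G := fun l =>
    hamNorm_one_eq G ▸ (hamField_shiftEquivariant hG).l1Norm_le l
  calc l1Norm (lieField N F G k)
      ≤ ∑ l, l1Norm (pderiv l (hamField N F k) * hamField N G l) := l1Norm_sum_le _ _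
    _ ≤ ∑ l, l1Norm (pderiv l (hamField N F k)) * hamNorm N 1 G :=
      Finset.sum_le_sum fun l _ =>
        (l1Norm_mul_le _ _).trans (mul_le_mul_of_nonneg_left (hG' l) (l1Norm_nonneg _))
    _ ≤ s * l1Norm (hamField N F k) * hamNorm N 1 G := by
      rw [← Finset.sum_mul]
      exact mul_le_mul_of_nonneg_right (sum_l1Norm_pderiv_le (hamField_isHomogeneous hF k))
        ((l1Norm_nonneg _).trans (hG' (Sum.inl 0)))

lemma ShiftEquivariant.norm_eval_le {P : Idx N → MvPolynomial (Idx N) ℝ}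
    (hP : ShiftEquivariant P) {d : ℕ} (hd : ∀ k, (P k).IsHomogeneous d) (z : Idx N → ℝ) :
    ‖fun k => eval z (P k)‖ ≤ (l1Norm (P (Sum.inl 0)) + l1Norm (P (Sum.inr 0))) * ‖z‖ ^ d := by
  have hz : ∀ l, |z l| ≤ ‖z‖ := fun l => (Real.norm_eq_abs _).symm.trans_le (norm_le_pi_norm z l)
  have hzd : 0 ≤ ‖z‖ ^ d := pow_nonneg (norm_nonneg z) d
  refine (pi_norm_le_iff_of_nonneg (mul_nonneg (add_nonneg (l1Norm_nonneg _) (l1Norm_nonneg _))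
    hzd)).2 fun k => ?_
  rw [Real.norm_eq_abs]
  exact (abs_eval_le_of_isHomogeneous (hd k) hz).trans
    (mul_le_mul_of_nonneg_right (hP.l1Norm_le k) hzd)

lemma ShiftEquivariant.enorm_eval_le {P : Idx N → MvPolynomial (Idx N) ℝ}
    (hP : ShiftEquivariant P) {d : ℕ} (hd0 : d ≠ 0) (hd : ∀ k, (P k).IsHomogeneous d)
    (z : Idx N → ℝ) :
    _root_.enorm (fun k => eval z (P k)) ≤
      (l1Norm (P (Sum.inl 0)) + l1Norm (P (Sum.inr 0))) * _root_.enorm z ^ d := by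
  have half : ∀ k₀, √(∑ j, eval z (P (shift N j k₀)) ^ 2) ≤ l1Norm (P k₀) * _root_.enorm z ^ d :=
    fun k₀ => by
      have hshift : ∀ j, eval z (P (shift N j k₀)) = eval (z ∘ shift N j) (P k₀) := fun j => by
        rw [hP, eval_rename]
      simp only [hshift]
      exact sqrt_sum_sq_eval_comp_le hd0 (hd k₀) z shift_injective_left
  calc _root_.enorm (fun k => eval z (P k))
      = √(∑ j, eval z (P (shift N j (Sum.inl 0))) ^ 2 +
          ∑ j, eval z (P (shift N j (Sum.inr 0))) ^ 2) := by
        simp [_root_.enorm, Fintype.sum_sum_type]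
    _ ≤ _ := (sqrt_add_le_sqrt_add_sqrt (by positivity) (by positivity)).trans
        (add_le_add (half _) (half _))
    _ = _ := by ring

end Cyclic

/-- For `𝒳 = χ^⊕` (`χ` homogeneous of degree `r+1`, `r ≥ 1`) and
`F = f^⊕` (`f` homogeneous of degree `s+1`, `s ≥ 1`), the Lie derivative
`(L_𝒳 X_F)(z) = dX_F(z)[X_𝒳(z)]` satisfies
`‖(L_𝒳 X_F)(z)‖ ≤ s |X_F|₁ |X_𝒳|₁ ‖z‖^{s+r−1}` for every `z`, both for the supremum
(`ℓ^∞`) and the euclidean (`ℓ²`) norm on `ℝ^{2N}`. -/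
theorem lie_derivative_field_estimate (N : ℕ) [NeZero N]
    (r s : ℕ) (hr : 1 ≤ r) (hs : 1 ≤ s)
    (χ f : MvPolynomial (Idx N) ℝ)
    (hχ : χ.IsHomogeneous (r + 1)) (hf : f.IsHomogeneous (s + 1)) :
    (∀ z : Idx N → ℝ,
        ‖fderiv ℝ (Xvec N (oplus N f)) z (Xvec N (oplus N χ) z)‖ ≤
          s * hamNorm N 1 (oplus N f) * hamNorm N 1 (oplus N χ) * ‖z‖ ^ (s + r - 1)) ∧
    (∀ z : Idx N → ℝ,
        _root_.enorm (fderiv ℝ (Xvec N (oplus N f)) z (Xvec N (oplus N χ) z)) ≤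
          s * hamNorm N 1 (oplus N f) * hamNorm N 1 (oplus N χ) *
            _root_.enorm z ^ (s + r - 1)) := by
  have hF : (oplus N f).IsHomogeneous (s + 1) := oplus_isHomogeneous hf
  set P := lieField N (oplus N f) (oplus N χ)
  have hP : ShiftEquivariant P :=
    lieField_shiftEquivariant (shiftInvariant_oplus f) (shiftInvariant_oplus χ)
  have hPhom : ∀ k, (P k).IsHomogeneous (s + r - 1) :=
    lieField_isHomogeneous hs hF (oplus_isHomogeneous hχ)
  have hPnorm : l1Norm (P (Sum.inl 0)) + l1Norm (P (Sum.inr 0)) ≤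
      s * hamNorm N 1 (oplus N f) * hamNorm N 1 (oplus N χ) := by
    have hx := l1Norm_lieField_le hF (shiftInvariant_oplus χ) (Sum.inl 0)
    have hy := l1Norm_lieField_le hF (shiftInvariant_oplus χ) (Sum.inr 0)
    rw [hamNorm_one_eq (oplus N f)]
    linarith
  refine ⟨fun z => ?_, fun z => ?_⟩ <;> rw [fderiv_Xvec_apply_Xvec]
  · exact (hP.norm_eval_le hPhom z).trans
      (mul_le_mul_of_nonneg_right hPnorm (pow_nonneg (norm_nonneg z) _))
  · exact (hP.enorm_eval_le (by omega) hPhom z).trans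
      (mul_le_mul_of_nonneg_right hPnorm (pow_nonneg (Real.sqrt_nonneg _) _))
end
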